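/- Let $T$ be symmetric positive semidefinite ($d\times d$), $B$ a $q\times d$ matrix, $Q$ symmetric positive semidefinite ($q\times q$) with $B T B^t + Q$ invertible. Then the matrix $\bar T = T - T B^t (B T B^t + Q)^{-1} B T$ is symmetric positive semidefinite. -/
import Mathlib


open Matrix

/-- If `T` is symmetric positive semidefinite, `Q` is symmetric positive semidefinite, and
`B T Bᵀ + Q` is invertible, then the Kalman updated covariance
`T - T Bᵀ (B T Bᵀ + Q)⁻¹ B T` is symmetric positive semidefinite. -/
theorem kalman_updated_covariance_posSemidef {d q : ℕ}
    (T : Matrix (Fin d) (Fin d) ℝ) (B : Matrix (Fin q) (Fin d) ℝ)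
    (Q : Matrix (Fin q) (Fin q) ℝ)
    (hT : T.PosSemidef) (hQ : Q.PosSemidef)
    (hInv : IsUnit (B * T * Bᵀ + Q).det) :
    (T - T * Bᵀ * (B * T * Bᵀ + Q)⁻¹ * B * T).PosSemidef := by
  set S := B * T * Bᵀ + Q with hSdef
  have hTt : Tᵀ = T := hT.1
  have hQt : Qᵀ = Q := hQ.1
  have hSt : Sᵀ = S := by
    simp [hSdef, transpose_add, transpose_mul, hTt, hQt, Matrix.mul_assoc]
  have hSit : (S⁻¹)ᵀ = S⁻¹ := by rw [transpose_nonsing_inv, hSt]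
  have hSinv : S⁻¹ * S = 1 := nonsing_inv_mul S hInv
  set K := T * Bᵀ * S⁻¹ with hKdef
  have hKt : Kᵀ = S⁻¹ * B * T := by
    simp [hKdef, transpose_mul, hTt, hSit, Matrix.mul_assoc]
  have key : T - T * Bᵀ * S⁻¹ * B * T
      = (1 - K * B) * T * (1 - K * B)ᵀ + K * Q * Kᵀ := by
    have h1 : K * S * Kᵀ = T * Bᵀ * S⁻¹ * B * T := by
      rw [hKt, hKdef]
      calc T * Bᵀ * S⁻¹ * S * (S⁻¹ * B * T)
          = T * Bᵀ * (S⁻¹ * S) * (S⁻¹ * (B * T)) := by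
            simp only [Matrix.mul_assoc]
        _ = T * Bᵀ * S⁻¹ * B * T := by
            rw [hSinv, Matrix.mul_one]; simp only [Matrix.mul_assoc]
    have h2 : K * (B * T * Bᵀ) * Kᵀ + K * Q * Kᵀ = K * S * Kᵀ := by
      rw [hSdef, Matrix.mul_add, Matrix.add_mul]
    have hA1 : T * Bᵀ * Kᵀ = T * Bᵀ * S⁻¹ * B * T := by
      rw [hKt]; simp only [Matrix.mul_assoc]
    have hA2 : K * (B * T) = T * Bᵀ * S⁻¹ * B * T := by
      rw [hKdef]; simp only [Matrix.mul_assoc]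
    have expand : (1 - K * B) * T * (1 - K * B)ᵀ + K * Q * Kᵀ
        = T - T * Bᵀ * Kᵀ - K * (B * T) + (K * (B * T * Bᵀ) * Kᵀ + K * Q * Kᵀ) := by
      rw [transpose_sub, transpose_one, transpose_mul]
      simp only [Matrix.mul_sub, Matrix.sub_mul, Matrix.mul_one, Matrix.one_mul,
        Matrix.mul_assoc]
      abel
    rw [expand, h2, h1, hA1, hA2]
    abel
  rw [key]
  have e1 : (1 - K * B) * T * (1 - K * B)ᵀ = (1 - K * B) * T * (1 - K * B)ᴴ := by
    rw [conjTranspose_eq_transpose_of_trivial]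
  have e2 : K * Q * Kᵀ = K * Q * Kᴴ := by rw [conjTranspose_eq_transpose_of_trivial]
  rw [e1, e2]
  exact (hT.mul_mul_conjTranspose_same _).add (hQ.mul_mul_conjTranspose_same _)
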